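/- arXiv:math/0503112 — 6 statements merged into one kernel-verified Lean document; each statement's English description precedes it below -/
import Mathlib

section
/- For every permutation π of {1,...,n+1}, the set of left-to-right almost-minima values of π equals Del_A(π⁻¹) ∪ {1,2}, where Del_A(τ) = { j ∈ {3,...,n+1} : there is at most one i < j with τ(i) < τ(j) }. -/
/-!
The map `i ↦ σ i` sends the positions counted by `ascentsBefore σ j` (the `i < j` with
`σ i < σ j`) bijectively onto those counted by `ascentsBefore σ⁻¹ (σ j)`. So the value `σ j` is a
left-to-right almost-minimum of `σ` exactly when the position `σ j` is one of `σ⁻¹`, and the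
positions `0` and `1` always are, since fewer than two positions precede them.
-/

open Finset

section AscentsBefore

variable {α : Type*} [LinearOrder α] [Fintype α]

def ascentsBefore (σ : Equiv.Perm α) (j : α) : ℕ := #{i | i < j ∧ σ i < σ j}

lemma ascentsBefore_inv_apply (σ : Equiv.Perm α) (j : α) :
    ascentsBefore σ⁻¹ (σ j) = ascentsBefore σ j := by
  refine (card_equiv σ fun i => ?_).symm
  simp [and_comm]

lemma ascentsBefore_le_card_Iio [LocallyFiniteOrderBot α] (σ : Equiv.Perm α) (j : α) :
    ascentsBefore σ j ≤ #(Iio j) :=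
  card_le_card fun _ hi => mem_Iio.2 (mem_filter.1 hi).2.1

end AscentsBefore

lemma Fin.val_lt_two_iff {n : ℕ} (v : Fin (n + 1)) : (v : ℕ) < 2 ↔ v = 0 ∨ v = 1 := by
  rcases v with ⟨_ | _ | k, hv⟩
  · simp
  · simp [Fin.ext_iff, Nat.mod_eq_of_lt hv]
  · simp [Fin.ext_iff, Nat.mod_eq_of_lt (by omega : 1 < n + 1)]

/-- `ltram(π) = Del_A(π⁻¹) ∪ {1,2}` for `π ∈ S_{n+1}`, all in 0-indexed form:
`ltram(π)` is the set of values `π(j)` such that at most one `i < j` has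
`π(i) < π(j)`; `Del_A(τ)` is the set of positions `j` with `j > 2` (1-indexed),
i.e. `(j : ℕ) ≥ 2` (0-indexed), such that at most one `i < j` has `τ(i) < τ(j)`;
and the 1-indexed positions `{1,2}` become `{0,1} ⊆ Fin (n+1)`. -/
theorem stmt5 (n : ℕ) (π : Equiv.Perm (Fin (n + 1))) :
    {v : Fin (n + 1) | ∃ j : Fin (n + 1), π j = v ∧
        (Finset.univ.filter fun i => i < j ∧ π i < π j).card ≤ 1} =
      {j : Fin (n + 1) | 2 ≤ (j : ℕ) ∧
        (Finset.univ.filter fun i => i < j ∧ π⁻¹ i < π⁻¹ j).card ≤ 1} ∪ {0, 1} := by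
  change {v | ∃ j, π j = v ∧ ascentsBefore π j ≤ 1} =
    {j : Fin (n + 1) | 2 ≤ (j : ℕ) ∧ ascentsBefore π⁻¹ j ≤ 1} ∪ {0, 1}
  have h_values : ∀ v, (∃ j, π j = v ∧ ascentsBefore π j ≤ 1) ↔ ascentsBefore π⁻¹ v ≤ 1 :=
    fun v => ⟨by rintro ⟨j, rfl, hj⟩; rwa [ascentsBefore_inv_apply],
      fun h => ⟨π⁻¹ v, π.apply_symm_apply v, by rw [← ascentsBefore_inv_apply]; simpa using h⟩⟩
  ext v
  simp only [Set.mem_ofPred_eq, Set.mem_union, Set.mem_insert_iff, Set.mem_singleton_iff,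
    h_values, ← Fin.val_lt_two_iff]
  have h_small : ascentsBefore π⁻¹ v ≤ v :=
    (ascentsBefore_le_card_Iio _ v).trans_eq (Fin.card_Iio v)
  omega
end

section
/- For every permutation π of {1,...,n+q-1} and every k ≥ 0, the set ltrm_{k+1}(π) = { π(j) : #{ i < j : π(i) < π(j) } ≤ k } equals Del_{k+1}(π⁻¹) ∪ {1,2,...,k+1}, where Del_{k+1}(τ) = { j ∈ {k+2,...,n+q-1} : #{ i < j : τ(i) < τ(j) } ≤ k }. -/
/-! Applying `π` turns the positions `i < j` with `π i < π j` into the values `w < π j` with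
`π⁻¹ w < π⁻¹ (π j)`, so the statistic of `π` at position `j` equals that of `π⁻¹` at position
`π j`. A value `v ≤ k` (0-indexed) always qualifies, since at most `k` values lie below it. -/

open Finset

lemma card_filter_lt_and_perm_lt {α : Type*} [Fintype α] [LinearOrder α]
    (π : Equiv.Perm α) (j : α) :
    #{i | i < j ∧ π i < π j} = #{w | w < π j ∧ π⁻¹ w < π⁻¹ (π j)} :=
  card_equiv π fun i => by simp [and_comm]

lemma Fin.card_filter_lt_and_le_val {m : ℕ} (v : Fin m) (p : Fin m → Prop) [DecidablePred p] :
    #{w | w < v ∧ p w} ≤ v :=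
  calc #{w | w < v ∧ p w} ≤ #(Iio v) := card_le_card fun w => by simp +contextual
    _ = v := Fin.card_Iio v

/-- `ltrm_{k+1}(π) = Del_{k+1}(π⁻¹) ∪ {1,...,k+1}` for `π ∈ S_{n+q-1}`, in 0-indexed
form: `ltrm_{k+1}(π)` is the set of values `π(j)` such that at most `k` indices
`i < j` have `π(i) < π(j)`; `Del_{k+1}(τ)` is the set of positions `j` with
`j > k+1` (1-indexed), i.e. `(j:ℕ) ≥ k+1` (0-indexed), with at most `k` indices
`i < j` satisfying `τ(i) < τ(j)`; and `{1,...,k+1}` becomes `{j | (j:ℕ) ≤ k}`. -/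
theorem stmt6 (n q k : ℕ) (π : Equiv.Perm (Fin (n + q - 1))) :
    {v : Fin (n + q - 1) | ∃ j : Fin (n + q - 1), π j = v ∧
        (Finset.univ.filter fun i => i < j ∧ π i < π j).card ≤ k} =
      {j : Fin (n + q - 1) | k + 1 ≤ (j : ℕ) ∧
        (Finset.univ.filter fun i => i < j ∧ π⁻¹ i < π⁻¹ j).card ≤ k} ∪
      {j : Fin (n + q - 1) | (j : ℕ) ≤ k} := by
  ext v
  obtain ⟨j, rfl⟩ := π.surjective v
  simp only [Set.mem_ofPred_eq, Set.mem_union, π.injective.eq_iff, exists_eq_left]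
  rw [card_filter_lt_and_perm_lt]
  by_cases hv : (π j : ℕ) ≤ k
  · simpa [hv] using (Fin.card_filter_lt_and_le_val (π j) _).trans hv
  · simp [hv, Nat.lt_of_not_le hv]
end

section
/- Let v ∈ S_{n+q-1} with canonical presentation v = v_1 ⋯ v_{n+q-2}, v_j ∈ R_j. Then for every q < j ≤ n+q-1, the value j belongs to ltrm_q(v) if and only if v_{j-1} = s_{j-1} s_{j-2} ⋯ s_ℓ for some ℓ ≤ q. -/
/-!
Split `v = A * g_{u-1} * B` with `A = g_0 ⋯ g_{u-2}` and `B = g_u ⋯ g_{N-1}`. Every factor of `A`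
fixes the values `≥ u`, so `A` fixes `u` and preserves the set of values below `u`. Each `g_j⁻¹` is
increasing on `{0, …, j}` and maps it into `{0, …, j+1}`, so `B⁻¹` is increasing on `{0, …, u}`.
Hence the number of earlier letters of `v` smaller than `u` equals the corresponding number for
`g_{u-1}`: it is `u` if `g_{u-1} = 1`, and `ℓ` if `g_{u-1} = s_{u-1} ⋯ s_ℓ`, a cycle sending `ℓ` to
`u` and fixing `0, …, ℓ-1`.
-/

/-- The 0-indexed Coxeter generator `s_i = (i, i+1)` of `S_m` (identity if out of range). -/
def gen (m i : ℕ) : Equiv.Perm (Fin m) :=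
  if h : i + 1 < m then Equiv.swap ⟨i, by omega⟩ ⟨i + 1, h⟩ else 1

/-- `R_j` with 0-indexed generators: `{1} ∪ {s_j s_{j-1} ⋯ s_ℓ : 0 ≤ ℓ ≤ j}`. -/
def Rset (m j : ℕ) : Set (Equiv.Perm (Fin m)) :=
  {π | π = 1 ∨ ∃ ℓ ≤ j, π = ((List.range' ℓ (j + 1 - ℓ)).reverse.map (gen m)).prod}

open Equiv Finset

lemma Equiv.Perm.apply_mem_iff_of_forall_notMem {α : Type*} {σ : Perm α} {s : Set α}
    (hσ : ∀ x ∉ s, σ x = x) (x : α) : σ x ∈ s ↔ x ∈ s := by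
  refine ⟨fun hx => ?_, fun hx => ?_⟩
  · by_contra h
    exact h (hσ x h ▸ hx)
  · by_contra h
    rw [σ.injective (hσ (σ x) h)] at h
    exact h hx

section LowerCount

variable {α : Type*} [Fintype α] [LinearOrder α]

/-- `w j ∈ ltrm_q(w)` iff `lowerCount w j ≤ q - 1`. -/
def lowerCount (w : Perm α) (j : α) : ℕ :=
  #{i | i < j ∧ w i < w j}

lemma lowerCount_mul_left (A w : Perm α) (j : α) (hA : ∀ x, w j ≤ x → A x = x) :
    lowerCount (A * w) j = lowerCount w j := by
  have hlt : ∀ x, A x < w j ↔ x < w j :=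
    Perm.apply_mem_iff_of_forall_notMem (s := Set.Iio (w j)) fun x hx => hA x (not_lt.mp hx)
  simp only [lowerCount, Perm.mul_apply, hA (w j) le_rfl, hlt]

lemma lowerCount_mul_inv_apply (G B : Perm α) {c k : α} (hB : StrictMonoOn ⇑B⁻¹ (Set.Iic c))
    (hk : k ≤ c) (hG : ∀ y, G y < G k → y ≤ c) :
    lowerCount (G * B) (B⁻¹ k) = lowerCount G k := by
  refine Finset.card_equiv B fun i => ?_
  simp only [mem_filter, mem_univ, true_and, Perm.mul_apply, Perm.coe_inv, apply_symm_apply]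
  refine and_congr_left fun hi => ?_
  rw [← hB.lt_iff_lt (hG _ hi) hk]
  simp

theorem lowerCount_mul_mul_inv_apply (A G B : Perm α) (u : α) (hA : ∀ x, u ≤ x → A x = x)
    (hG : ∀ x, u < x → G x = x) (hB : StrictMonoOn ⇑B⁻¹ (Set.Iic u)) :
    lowerCount (A * G * B) ((A * G * B)⁻¹ u) = lowerCount G (G⁻¹ u) := by
  have hle : ∀ y, G y ≤ u ↔ y ≤ u :=
    Perm.apply_mem_iff_of_forall_notMem (s := Set.Iic u) fun x hx => hG x (not_le.mp hx)
  have hAu : A⁻¹ u = u := by rw [Perm.inv_eq_iff_eq, hA u le_rfl]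
  rw [mul_inv_rev, mul_inv_rev, Perm.mul_apply, Perm.mul_apply, hAu, mul_assoc,
    lowerCount_mul_left _ _ _ (by simpa using hA)]
  refine lowerCount_mul_inv_apply G B hB ?_ fun y hy => ?_
  · simp [← hle]
  · rw [← hle]
    exact (hy.trans_eq (G.apply_symm_apply u)).le

end LowerCount

def descProd (m ℓ j : ℕ) : Perm (Fin m) :=
  ((List.range' ℓ (j + 1 - ℓ)).reverse.map (gen m)).prod

section CanonicalWord

variable {m : ℕ}

lemma gen_apply_val {i : ℕ} (hi : i + 1 < m) (x : Fin m) :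
    (gen m i x : ℕ) = if (x : ℕ) = i then i + 1 else if (x : ℕ) = i + 1 then i else x := by
  rw [gen, dif_pos hi, Equiv.swap_apply_def]
  simp only [Fin.ext_iff]
  split_ifs <;> simp_all

lemma descProd_self (ℓ : ℕ) : descProd m ℓ ℓ = gen m ℓ := by
  simp [descProd]

lemma descProd_succ {ℓ j : ℕ} (h : ℓ ≤ j + 1) :
    descProd m ℓ (j + 1) = gen m (j + 1) * descProd m ℓ j := by
  rw [descProd, descProd, show j + 1 + 1 - ℓ = j + 1 - ℓ + 1 by omega, List.range'_concat,
    List.reverse_append, show ℓ + 1 * (j + 1 - ℓ) = j + 1 by omega]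
  simp

lemma descProd_apply_val {ℓ j : ℕ} (hℓ : ℓ ≤ j) (hj : j + 1 < m) (x : Fin m) :
    (descProd m ℓ j x : ℕ) =
      if (x : ℕ) = ℓ then j + 1 else if ℓ < (x : ℕ) ∧ (x : ℕ) ≤ j + 1 then x - 1 else x := by
  induction j with
  | zero =>
    obtain rfl : ℓ = 0 := by omega
    rw [descProd_self, gen_apply_val hj]
    split_ifs <;> omega
  | succ j ih =>
    obtain rfl | hℓj := eq_or_lt_of_le hℓ
    · rw [descProd_self, gen_apply_val hj]
      split_ifs <;> omega
    · rw [descProd_succ hℓ, Perm.mul_apply, gen_apply_val hj, ih (by omega) (by omega)]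
      split_ifs <;> omega

lemma descProd_inv_apply_val {ℓ j : ℕ} (hℓ : ℓ ≤ j) (hj : j + 1 < m) (x : Fin m) :
    ((descProd m ℓ j)⁻¹ x : ℕ) =
      if (x : ℕ) = j + 1 then ℓ else if ℓ ≤ (x : ℕ) ∧ (x : ℕ) ≤ j then x + 1 else x := by
  set y : Fin m := ⟨_, (by split_ifs <;> omega :
    (if (x : ℕ) = j + 1 then ℓ else if ℓ ≤ (x : ℕ) ∧ (x : ℕ) ≤ j then x + 1 else x) < m)⟩
  have hy : descProd m ℓ j y = x := by
    ext
    rw [descProd_apply_val hℓ hj]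
    simp only [y]
    split_ifs <;> omega
  rw [Perm.inv_eq_iff_eq.mpr hy.symm]

lemma descProd_inv_apply_top {ℓ j : ℕ} (hℓ : ℓ ≤ j) (hj : j + 1 < m) {x : Fin m}
    (hx : (x : ℕ) = j + 1) : (descProd m ℓ j)⁻¹ x = ⟨ℓ, by omega⟩ := by
  ext
  rw [descProd_inv_apply_val hℓ hj]
  simp [hx]

lemma descProd_ne_one {ℓ j : ℕ} (hℓ : ℓ ≤ j) (hj : j + 1 < m) : descProd m ℓ j ≠ 1 := by
  intro h
  have := congrArg Fin.val (descProd_inv_apply_top hℓ hj (x := ⟨j + 1, hj⟩) rfl)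
  simp only [h, inv_one, Perm.one_apply] at this
  omega

lemma eq_of_descProd_eq {ℓ ℓ' j : ℕ} (hℓ : ℓ ≤ j) (hℓ' : ℓ' ≤ j) (hj : j + 1 < m)
    (h : descProd m ℓ j = descProd m ℓ' j) : ℓ = ℓ' := by
  have := descProd_inv_apply_top hℓ hj (x := ⟨j + 1, hj⟩) rfl
  rw [h, descProd_inv_apply_top hℓ' hj rfl] at this
  exact (Fin.mk.inj this).symm

lemma lowerCount_one (k : Fin m) : lowerCount 1 k = k := by
  rw [← Fin.card_Iio k, lowerCount]
  congr 1
  ext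
  simp

lemma lowerCount_descProd {ℓ j : ℕ} (hℓ : ℓ ≤ j) (hj : j + 1 < m) :
    lowerCount (descProd m ℓ j) ⟨ℓ, by omega⟩ = ℓ := by
  conv_rhs => rw [← Fin.val_mk (show ℓ < m by omega), ← Fin.card_Iio]
  rw [lowerCount]
  congr 1
  ext i
  simp only [mem_filter, mem_univ, true_and, mem_Iio, Fin.lt_def, descProd_apply_val hℓ hj]
  split_ifs <;> omega

lemma mem_Rset_iff {j : ℕ} {π : Perm (Fin m)} :
    π ∈ Rset m j ↔ π = 1 ∨ ∃ ℓ ≤ j, π = descProd m ℓ j :=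
  Iff.rfl

lemma apply_eq_self_of_mem_Rset {j : ℕ} {π : Perm (Fin m)} (hπ : π ∈ Rset m j) {x : Fin m}
    (hx : j + 1 < x) : π x = x := by
  obtain rfl | ⟨ℓ, hℓ, rfl⟩ := mem_Rset_iff.mp hπ
  · rfl
  · ext
    rw [descProd_apply_val hℓ (by omega)]
    split_ifs <;> omega

lemma strictMonoOn_inv_of_mem_Rset {j : ℕ} {π : Perm (Fin m)} (hπ : π ∈ Rset m j)
    (hj : j + 1 < m) : StrictMonoOn ⇑π⁻¹ {x | (x : ℕ) ≤ j} := by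
  obtain rfl | ⟨ℓ, hℓ, rfl⟩ := mem_Rset_iff.mp hπ
  · exact strictMono_id.strictMonoOn _
  · intro x hx y hy hxy
    simp only [Set.mem_ofPred_eq] at hx hy
    rw [Fin.lt_def] at hxy ⊢
    rw [descProd_inv_apply_val hℓ hj, descProd_inv_apply_val hℓ hj]
    split_ifs <;> omega

lemma strictMonoOn_prod_inv_of_mem_Rset (L : List (Perm (Fin m))) (c : ℕ)
    (hc : c + L.length < m) (hL : ∀ i (hi : i < L.length), L[i] ∈ Rset m (c + i)) :
    StrictMonoOn ⇑(L.prod)⁻¹ {x | (x : ℕ) ≤ c} := by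
  induction L generalizing c with
  | nil => exact strictMono_id.strictMonoOn _
  | cons p L ih =>
    have hp : p ∈ Rset m c := hL 0 (by simp)
    have hmaps : Set.MapsTo ⇑p⁻¹ {x | (x : ℕ) ≤ c} {x | (x : ℕ) ≤ c + 1} := fun x hx => by
      rw [← Perm.apply_mem_iff_of_forall_notMem (σ := p) fun y hy =>
        apply_eq_self_of_mem_Rset hp (by simpa using hy)]
      simpa using Nat.le_succ_of_le hx
    rw [List.prod_cons, mul_inv_rev, Perm.coe_mul]
    refine StrictMonoOn.comp (ih (c + 1) (by simp at hc; omega) fun i hi => ?_)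
      (strictMonoOn_inv_of_mem_Rset hp (by simp at hc; omega)) hmaps
    have := hL (i + 1) (by simpa using hi)
    rwa [List.getElem_cons_succ, show c + (i + 1) = c + 1 + i by omega] at this

theorem lowerCount_prod_ofFn_inv_apply {N : ℕ} (hN : N < m) (g : Fin N → Perm (Fin m))
    (hg : ∀ j : Fin N, g j ∈ Rset m j) (t : Fin N) :
    lowerCount (List.ofFn g).prod ((List.ofFn g).prod⁻¹ ⟨t + 1, by omega⟩) =
      lowerCount (g t) ((g t)⁻¹ ⟨t + 1, by omega⟩) := by
  set L := List.ofFn g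
  have hsplit : L.prod = (L.take t).prod * g t * (L.drop (t + 1)).prod := by
    have hget : L[(t : ℕ)]'(by simp [L]) = g t := List.getElem_ofFn _
    rw [mul_assoc, ← hget, ← List.prod_cons, ← List.drop_eq_getElem_cons,
      List.prod_take_mul_prod_drop]
  have hfix : (L.take t).prod ∈ fixingSubgroup (Perm (Fin m)) {x : Fin m | t + 1 ≤ (x : ℕ)} := by
    refine Subgroup.list_prod_mem _ fun p hp => ?_
    obtain ⟨i, hi, rfl⟩ := List.mem_iff_getElem.mp hp
    rw [List.length_take, List.length_ofFn] at hi
    rw [mem_fixingSubgroup_iff, List.getElem_take, List.getElem_ofFn]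
    exact fun x hx => apply_eq_self_of_mem_Rset (hg _) (by simp at hx ⊢; omega)
  rw [hsplit]
  refine lowerCount_mul_mul_inv_apply _ _ _ _ (fun x hx => (mem_fixingSubgroup_iff _).mp hfix x hx)
    (fun x hx => apply_eq_self_of_mem_Rset (hg t) hx)
    (strictMonoOn_prod_inv_of_mem_Rset _ (t + 1) (by simp [L]; omega) fun i hi => ?_)
  rw [List.getElem_drop, List.getElem_ofFn]
  exact hg _

end CanonicalWord

/-- Everything is 0-indexed: the paper's value `j` is `u + 1`, its factor `v_{j-1}` is
`g ⟨u - 1, _⟩`, and its bound `ℓ ≤ q` becomes `ℓ ≤ q - 1`. -/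
theorem stmt9 (n q : ℕ) (hq : 1 ≤ q) (v : Equiv.Perm (Fin (n + q - 1)))
    (g : Fin (n + q - 2) → Equiv.Perm (Fin (n + q - 1)))
    (hg : ∀ j : Fin (n + q - 2), g j ∈ Rset (n + q - 1) j.1)
    (hv : v = (List.ofFn g).prod)
    (u : Fin (n + q - 1)) (hu : q ≤ (u : ℕ)) :
    (∃ j : Fin (n + q - 1), v j = u ∧
        (Finset.univ.filter fun i => i < j ∧ v i < v j).card ≤ q - 1) ↔
      ∃ ℓ ≤ q - 1, g ⟨(u : ℕ) - 1, by have := u.isLt; omega⟩ =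
        ((List.range' ℓ ((u : ℕ) - ℓ)).reverse.map (gen (n + q - 1))).prod := by
  have hum := u.isLt
  set t : Fin (n + q - 2) := ⟨(u : ℕ) - 1, by omega⟩
  have htu : (t : ℕ) + 1 = u := by simp [t]; omega
  have hlhs : (∃ j, v j = u ∧ (Finset.univ.filter fun i => i < j ∧ v i < v j).card ≤ q - 1) ↔
      lowerCount v (v⁻¹ u) ≤ q - 1 :=
    ⟨fun ⟨j, hj, hle⟩ => by rwa [← hj, Perm.coe_inv, symm_apply_apply],
      fun h => ⟨v⁻¹ u, by simp, h⟩⟩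
  have hrhs (ℓ : ℕ) : ((List.range' ℓ ((u : ℕ) - ℓ)).reverse.map (gen (n + q - 1))).prod =
      descProd (n + q - 1) ℓ t := by
    rw [descProd, htu]
  have hcount := lowerCount_prod_ofFn_inv_apply (by omega) g hg t
  rw [← hv, show (⟨t + 1, _⟩ : Fin (n + q - 1)) = u from Fin.ext htu] at hcount
  simp only [hlhs, hrhs, hcount]
  rcases mem_Rset_iff.mp (hg t) with hG | ⟨ℓ, hℓ, hG⟩
  · rw [hG, inv_one, Perm.one_apply, lowerCount_one]
    exact iff_of_false (by omega) fun ⟨ℓ, hℓ, h⟩ => descProd_ne_one (by omega) (by omega) h.symm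
  · rw [hG, descProd_inv_apply_top hℓ (by omega) htu.symm, lowerCount_descProd hℓ (by omega)]
    exact ⟨fun h => ⟨ℓ, h, rfl⟩, fun ⟨ℓ', hℓ', h⟩ =>
      eq_of_descProd_eq hℓ (by omega) (by omega) h ▸ hℓ'⟩
end

section
/- Let X be a linearly ordered alphabet, x ∈ X, and r a nonempty word over X whose last letter is ≤ x (respectively > x). Then r has a unique decomposition r = r^1 r^2 ⋯ r^p into nonempty factors such that in each factor, the last letter is ≤ x (resp. > x) and all earlier letters are > x (resp. ≤ x). -/
/-- A factor whose last letter is `≤ x` and all earlier letters are `> x`. -/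
def FactorBelow {X : Type*} [LinearOrder X] (x : X) (f : List X) : Prop :=
  ∃ g y, f = g ++ [y] ∧ y ≤ x ∧ ∀ a ∈ g, x < a

/-- A factor whose last letter is `> x` and all earlier letters are `≤ x`. -/
def FactorAbove {X : Type*} [LinearOrder X] (x : X) (f : List X) : Prop :=
  ∃ g y, f = g ++ [y] ∧ x < y ∧ ∀ a ∈ g, a ≤ x

/-! Both kinds of factor are words ending at their first letter satisfying a predicate `P`
(`· ≤ x`, resp. `x < ·`). Cutting a word after each letter satisfying `P` gives such a
decomposition whenever the last letter satisfies `P`, and it is the only one: the first factor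
of any decomposition is forced to be the longest prefix avoiding `P` followed by one letter. -/

namespace List

variable {X : Type*} {P : X → Prop}

def EndsAtFirst (P : X → Prop) (f : List X) : Prop :=
  ∃ g y, f = g ++ [y] ∧ P y ∧ ∀ a ∈ g, ¬ P a

lemma EndsAtFirst.ne_nil {f : List X} (h : EndsAtFirst P f) : f ≠ [] := by
  obtain ⟨g, y, rfl, -, -⟩ := h
  simp

lemma endsAtFirst_singleton {a : X} (ha : P a) : EndsAtFirst P [a] :=
  ⟨[], a, rfl, ha, by simp⟩

lemma EndsAtFirst.cons {a : X} {f : List X} (ha : ¬ P a) (h : EndsAtFirst P f) :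
    EndsAtFirst P (a :: f) := by
  obtain ⟨g, y, rfl, hy, hg⟩ := h
  exact ⟨a :: g, y, rfl, hy, by simpa [ha] using hg⟩

lemma EndsAtFirst.append_inj {f₁ f₂ s₁ s₂ : List X} (h₁ : EndsAtFirst P f₁)
    (h₂ : EndsAtFirst P f₂) (h : f₁ ++ s₁ = f₂ ++ s₂) : f₁ = f₂ ∧ s₁ = s₂ := by
  classical
  obtain ⟨g₁, y₁, rfl, hy₁, hg₁⟩ := h₁
  obtain ⟨g₂, y₂, rfl, hy₂, hg₂⟩ := h₂
  have takeWhile_eq : ∀ (g : List X) y s, P y → (∀ a ∈ g, ¬ P a) →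
      (g ++ [y] ++ s).takeWhile (fun a => ¬ P a) = g := fun g y s hy hg => by
    rw [append_assoc, takeWhile_append_of_pos (by simpa using hg)]
    simp [hy]
  have hg : g₁ = g₂ := by
    rw [← takeWhile_eq g₁ y₁ s₁ hy₁ hg₁, ← takeWhile_eq g₂ y₂ s₂ hy₂ hg₂, h]
  subst hg
  simp_all

lemma exists_flatten_eq_of_endsAtFirst {r : List X} (hr : ∀ y ∈ r.getLast?, P y) :
    ∃ L : List (List X), L.flatten = r ∧ ∀ f ∈ L, EndsAtFirst P f := by
  induction r with
  | nil => exact ⟨[], rfl, by simp⟩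
  | cons a t ih =>
    have ht : ∀ y ∈ t.getLast?, P y := fun y hy =>
      hr y (by simp_all [getLast?_cons])
    obtain ⟨L, rfl, hL⟩ := ih ht
    by_cases ha : P a
    · exact ⟨[a] :: L, rfl, by simpa [endsAtFirst_singleton ha] using hL⟩
    · rcases L with _ | ⟨f, L⟩
      · exact absurd (hr a (by simp)) ha
      · refine ⟨(a :: f) :: L, rfl, ?_⟩
        simp only [mem_cons, forall_eq_or_imp] at hL ⊢
        exact ⟨hL.1.cons ha, hL.2⟩

lemma eq_of_flatten_eq_of_endsAtFirst {L₁ L₂ : List (List X)}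
    (h₁ : ∀ f ∈ L₁, EndsAtFirst P f) (h₂ : ∀ f ∈ L₂, EndsAtFirst P f)
    (h : L₁.flatten = L₂.flatten) : L₁ = L₂ := by
  induction L₁ generalizing L₂ with
  | nil =>
    rcases L₂ with _ | ⟨f, L₂⟩
    · rfl
    · simpa using (h₂ f mem_cons_self).ne_nil (flatten_eq_nil_iff.mp h.symm f mem_cons_self)
  | cons f₁ L₁ ih =>
    rcases L₂ with _ | ⟨f₂, L₂⟩
    · simpa using (h₁ f₁ mem_cons_self).ne_nil (flatten_eq_nil_iff.mp h f₁ mem_cons_self)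
    · simp only [mem_cons, forall_eq_or_imp, flatten_cons] at h₁ h₂ h
      obtain ⟨rfl, hrest⟩ := h₁.1.append_inj h₂.1 h
      rw [ih h₁.2 h₂.2 hrest]

lemma existsUnique_flatten_eq_of_endsAtFirst {r : List X} (hr : ∀ y ∈ r.getLast?, P y) :
    ∃! L : List (List X), L.flatten = r ∧ ∀ f ∈ L, EndsAtFirst P f := by
  obtain ⟨L, hL, hLP⟩ := exists_flatten_eq_of_endsAtFirst hr
  exact ⟨L, ⟨hL, hLP⟩, fun L' ⟨hL', hL'P⟩ =>
    eq_of_flatten_eq_of_endsAtFirst hL'P hLP (hL'.trans hL.symm)⟩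

end List

lemma factorBelow_eq_endsAtFirst {X : Type*} [LinearOrder X] (x : X) :
    FactorBelow x = List.EndsAtFirst (· ≤ x) := by
  ext f
  simp [FactorBelow, List.EndsAtFirst]

lemma factorAbove_eq_endsAtFirst {X : Type*} [LinearOrder X] (x : X) :
    FactorAbove x = List.EndsAtFirst (x < ·) := by
  ext f
  simp [FactorAbove, List.EndsAtFirst]

/-- Unique decomposition of a nonempty word into the factors used in the
definition of Foata's `γ_x`: if the last letter of `r` is `≤ x` (resp. `> x`),
then `r` factors uniquely into (nonempty) blocks whose last letter is `≤ x`
(resp. `> x`) and whose other letters are all `> x` (resp. `≤ x`). -/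
theorem stmt11 {X : Type*} [LinearOrder X] (x : X) (r : List X) (y : X)
    (hy : r.getLast? = some y) :
    (y ≤ x → ∃! L : List (List X), L.flatten = r ∧ ∀ f ∈ L, FactorBelow x f) ∧
    (x < y → ∃! L : List (List X), L.flatten = r ∧ ∀ f ∈ L, FactorAbove x f) := by
  have last_mem : ∀ P : X → Prop, P y → ∀ z ∈ r.getLast?, P z := by
    simp [hy]
  rw [factorBelow_eq_endsAtFirst, factorAbove_eq_endsAtFirst]
  exact ⟨fun h => List.existsUnique_flatten_eq_of_endsAtFirst (last_mem _ h),
    fun h => List.existsUnique_flatten_eq_of_endsAtFirst (last_mem _ h)⟩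
end

section
/- Foata's second fundamental transformation Φ commutes with complementation: for every σ ∈ S_n, Φ(com(σ)) = com(Φ(σ)), where com(σ)(i) = n+1-σ(i). -/
/-! An order-reversing map `f` exchanges the two letter classes `≤ x` and `> x` (on letters
other than `x`) as well as the two cases in the definition of `γ_x`; hence it commutes with
`γ_x` on words not containing `x`, and, by induction along a word without repeated letters,
with `Φ`. Complementation `a ↦ n + 1 - a` is such a map. -/

def gammaGo (p : ℤ → Bool) : List ℤ → List ℤ → List ℤ
  | acc, [] => acc.reverse
  | acc, c :: d =>
      if p c then c :: (acc.reverse ++ gammaGo p [] d) else gammaGo p (c :: acc) d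

/-- Foata's operation `γ_x`. -/
def gammaF (x : ℤ) (r : List ℤ) : List ℤ :=
  match r.getLast? with
  | none => []
  | some y =>
      if y ≤ x then gammaGo (fun z => decide (z ≤ x)) [] r
      else gammaGo (fun z => decide (x < z)) [] r

/-- Foata's second fundamental transformation on words:
`Φ([]) = []` and `Φ(r x) = γ_x(Φ(r)) x`. -/
def foataF (r : List ℤ) : List ℤ :=
  r.foldl (fun st y => gammaF y st ++ [y]) []

/-- The one-line word (with letters `1,…,n` as integers) of `σ ∈ S_n`. -/
def word {n : ℕ} (σ : Equiv.Perm (Fin n)) : List ℤ :=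
  List.ofFn fun i => ((σ i : ℕ) : ℤ) + 1

lemma gammaGo_perm (p : ℤ → Bool) (acc d : List ℤ) :
    (gammaGo p acc d).Perm (acc.reverse ++ d) := by
  induction d generalizing acc with
  | nil => simp [gammaGo]
  | cons a d ih =>
    simp only [gammaGo]
    split
    · refine (((ih []).append_left acc.reverse).cons a).trans ?_
      simpa using List.perm_middle.symm
    · simpa using ih (a :: acc)

lemma gammaF_perm (x : ℤ) (r : List ℤ) : (gammaF x r).Perm r := by
  unfold gammaF
  split
  · next hr => simp [List.getLast?_eq_none_iff.mp hr]
  · split <;> simpa using gammaGo_perm _ [] r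

lemma gammaGo_map (p p' : ℤ → Bool) (f : ℤ → ℤ) (acc d : List ℤ)
    (h : ∀ z ∈ d, p (f z) = p' z) :
    gammaGo p (acc.map f) (d.map f) = (gammaGo p' acc d).map f := by
  induction d generalizing acc with
  | nil => simp [gammaGo, List.map_reverse]
  | cons a d ih =>
    have h' : ∀ z ∈ d, p (f z) = p' z := fun z hz => h z (List.mem_cons_of_mem a hz)
    simp only [List.map_cons, gammaGo, h a List.mem_cons_self]
    split
    · simpa [List.map_reverse] using ih [] h'
    · exact ih (a :: acc) h'

lemma gammaF_map_of_strictAnti {f : ℤ → ℤ} (hf : StrictAnti f) {x : ℤ} {r : List ℤ}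
    (hx : x ∉ r) : gammaF (f x) (r.map f) = (gammaF x r).map f := by
  have hne : ∀ z ∈ r, z ≠ x := fun z hz hzx => hx (hzx ▸ hz)
  unfold gammaF
  rw [List.getLast?_map]
  cases hr : r.getLast? with
  | none => simp
  | some y =>
    have hyx : y ≠ x := hne y (List.mem_of_getLast? hr)
    simp only [Option.map_some, hf.le_iff_ge]
    by_cases hle : y ≤ x
    · rw [if_pos hle, if_neg (by omega)]
      simpa using gammaGo_map _ _ f [] r fun z hz => by
        have := hne z hz
        simp only [hf.lt_iff_gt, decide_eq_decide]
        omega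
    · rw [if_neg hle, if_pos (by omega)]
      simpa using gammaGo_map _ _ f [] r fun z hz => by
        have := hne z hz
        simp only [hf.le_iff_ge, decide_eq_decide]
        omega

lemma foataF_concat (r : List ℤ) (x : ℤ) :
    foataF (r ++ [x]) = gammaF x (foataF r) ++ [x] := by
  simp [foataF, List.foldl_append]

lemma foataF_perm (r : List ℤ) : (foataF r).Perm r := by
  induction r using List.reverseRecOn with
  | nil => simp [foataF]
  | append_singleton r x ih =>
    rw [foataF_concat]
    exact ((gammaF_perm x (foataF r)).trans ih).append_right _

lemma foataF_map_of_strictAnti {f : ℤ → ℤ} (hf : StrictAnti f) {r : List ℤ} (hr : r.Nodup) :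
    foataF (r.map f) = (foataF r).map f := by
  induction r using List.reverseRecOn with
  | nil => simp [foataF]
  | append_singleton r x ih =>
    obtain ⟨hr, -, hxr⟩ := List.nodup_append'.mp hr
    have hx : x ∉ foataF r := fun hmem =>
      hxr ((foataF_perm r).mem_iff.mp hmem) (List.mem_singleton_self x)
    rw [List.map_append, List.map_singleton, foataF_concat, foataF_concat, ih hr,
      gammaF_map_of_strictAnti hf hx, List.map_append, List.map_singleton]

lemma word_nodup {n : ℕ} (σ : Equiv.Perm (Fin n)) : (word σ).Nodup :=
  List.nodup_ofFn.mpr fun i j hij => σ.injective (Fin.ext (by simpa using hij))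

/-- `Φ` commutes with complementation: `Φ(com σ) = com(Φ σ)`, where the
complement replaces each letter `a` of the word by `n+1-a`. -/
theorem stmt13 (n : ℕ) (σ : Equiv.Perm (Fin n)) :
    foataF ((word σ).map fun a => ((n : ℤ) + 1) - a) =
      (foataF (word σ)).map fun a => ((n : ℤ) + 1) - a := by
  have hcom : StrictAnti fun a : ℤ => (n : ℤ) + 1 - a := fun a b hab => by
    dsimp only
    omega
  exact foataF_map_of_strictAnti hcom (word_nodup σ)
end

section
/- MacMahon's equidistribution theorem: the major index and the inversion number are equidistributed over S_n, i.e., Σ_{σ ∈ S_n} q^{maj(σ)} = Σ_{σ ∈ S_n} q^{inv(σ)}. -/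
/-- Number of inversions of `σ ∈ S_n`. -/
def invNum {n : ℕ} (σ : Equiv.Perm (Fin n)) : ℕ :=
  (Finset.univ.filter fun p : Fin n × Fin n => p.1 < p.2 ∧ σ p.2 < σ p.1).card

def valAt {n : ℕ} (σ : Equiv.Perm (Fin n)) (i : ℕ) : ℕ :=
  if h : i < n then (σ ⟨i, h⟩ : ℕ) else 0

/-- 0-indexed descent set; a 0-indexed descent `i` is the 1-indexed descent `i+1`. -/
def desSet {n : ℕ} (σ : Equiv.Perm (Fin n)) : Finset ℕ :=
  (Finset.range (n - 1)).filter fun i => valAt σ (i + 1) < valAt σ i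

/-- The major index `maj σ = Σ_{i ∈ Des σ} i` (1-indexed). -/
def majP {n : ℕ} (σ : Equiv.Perm (Fin n)) : ℕ :=
  ∑ i ∈ desSet σ, (i + 1)

/-!
Both generating functions satisfy the recursion `F_{m+1}(x) = (1 + x + ⋯ + x^m) F_m(x)`.
Every permutation of `Fin (m + 1)` arises exactly once by inserting the new maximum `m` into one
of the `m + 1` slots of a permutation of `Fin m`. Inserting it into slot `p` creates `m - p` new
inversions. It raises the major index by `0` in the last slot, by `1, …, d` in the slots that
split one of the `d` descents (read from right to left), and by `d + 1, …, m` in the remaining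
slots (read from left to right); so these increments also run through `0, …, m` exactly once.
-/

namespace MacMahon

open Finset Equiv

def descentWeight (f : ℕ → ℕ) (i : ℕ) : ℕ := if f (i + 1) < f i then i + 1 else 0

def majSeq (f : ℕ → ℕ) (L : ℕ) : ℕ := ∑ i ∈ range (L - 1), descentWeight f i

def descentsIn (f : ℕ → ℕ) (a b : ℕ) : ℕ := ∑ i ∈ Ico a b, if f (i + 1) < f i then 1 else 0

def majIncrement (f : ℕ → ℕ) (L p : ℕ) : ℕ :=
  if p = L then 0
  else if 1 ≤ p ∧ f p < f (p - 1) then 1 + descentsIn f p (L - 1)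
  else p + 1 + descentsIn f p (L - 1)

lemma descentsIn_le (f : ℕ → ℕ) (a b : ℕ) : descentsIn f a b ≤ b - a :=
  calc descentsIn f a b ≤ ∑ _i ∈ Ico a b, 1 := sum_le_sum fun i _ => by split <;> omega
    _ = b - a := by simp

lemma descentsIn_add (f : ℕ → ℕ) {a b c : ℕ} (hab : a ≤ b) (hbc : b ≤ c) :
    descentsIn f a b + descentsIn f b c = descentsIn f a c :=
  sum_Ico_consecutive _ hab hbc

section MajIncrement

variable {f : ℕ → ℕ} {L p p' : ℕ}

lemma descentsIn_pred_self (hp : 1 ≤ p) :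
    descentsIn f (p - 1) p = if f p < f (p - 1) then 1 else 0 := by
  rw [descentsIn, Nat.Ico_pred_singleton (by omega), sum_singleton, Nat.sub_add_cancel hp]

lemma majIncrement_le (hp : p ≤ L) : majIncrement f L p ≤ L := by
  have := descentsIn_le f p (L - 1)
  unfold majIncrement
  split_ifs <;> omega

lemma majIncrement_of_descent (hp : p < L) (hd : 1 ≤ p ∧ f p < f (p - 1)) :
    1 ≤ majIncrement f L p ∧ majIncrement f L p ≤ descentsIn f 0 (L - 1) := by
  have h₁ := descentsIn_add f (Nat.zero_le (p - 1)) (show p - 1 ≤ L - 1 by omega)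
  have h₂ := descentsIn_add f (Nat.sub_le p 1) (show p ≤ L - 1 by omega)
  rw [descentsIn_pred_self hd.1, if_pos hd.2] at h₂
  rw [majIncrement, if_neg hp.ne, if_pos hd]
  omega

lemma majIncrement_of_rise (hp : p < L) (hd : ¬(1 ≤ p ∧ f p < f (p - 1))) :
    descentsIn f 0 (L - 1) < majIncrement f L p := by
  have h₁ := descentsIn_add f (Nat.zero_le p) (show p ≤ L - 1 by omega)
  have h₂ := descentsIn_le f 0 p
  rw [majIncrement, if_neg hp.ne, if_neg hd]
  omega

lemma majIncrement_strictAnti_descent (hpp' : p < p') (hp' : p' < L)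
    (hd : 1 ≤ p ∧ f p < f (p - 1)) (hd' : 1 ≤ p' ∧ f p' < f (p' - 1)) :
    majIncrement f L p' < majIncrement f L p := by
  have h₁ := descentsIn_add f (show p ≤ p' - 1 by omega) (show p' - 1 ≤ L - 1 by omega)
  have h₂ := descentsIn_add f (Nat.sub_le p' 1) (show p' ≤ L - 1 by omega)
  rw [descentsIn_pred_self hd'.1, if_pos hd'.2] at h₂
  rw [majIncrement, majIncrement, if_neg (show p ≠ L by omega), if_pos hd, if_neg hp'.ne,
    if_pos hd']
  omega

lemma majIncrement_strictMono_rise (hpp' : p < p') (hp' : p' < L)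
    (hd : ¬(1 ≤ p ∧ f p < f (p - 1))) (hd' : ¬(1 ≤ p' ∧ f p' < f (p' - 1))) :
    majIncrement f L p < majIncrement f L p' := by
  have h₁ := descentsIn_add f (show p ≤ p' - 1 by omega) (show p' - 1 ≤ L - 1 by omega)
  have h₂ := descentsIn_add f (Nat.sub_le p' 1) (show p' ≤ L - 1 by omega)
  have h₃ := descentsIn_le f p (p' - 1)
  rw [descentsIn_pred_self (by omega), if_neg fun h => hd' ⟨by omega, h⟩] at h₂
  rw [majIncrement, majIncrement, if_neg (show p ≠ L by omega), if_neg hd, if_neg hp'.ne,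
    if_neg hd']
  omega

lemma majIncrement_ne_of_lt (hpp' : p < p') (hp' : p' ≤ L) :
    majIncrement f L p ≠ majIncrement f L p' := by
  have hpL : p < L := by omega
  rcases hp'.eq_or_lt with rfl | hp'L
  · have hlast : majIncrement f p' p' = 0 := if_pos rfl
    rw [hlast]
    by_cases hd : 1 ≤ p ∧ f p < f (p - 1)
    · exact Nat.one_le_iff_ne_zero.1 (majIncrement_of_descent hpL hd).1
    · exact ((Nat.zero_le _).trans_lt (majIncrement_of_rise hpL hd)).ne'
  by_cases hd : 1 ≤ p ∧ f p < f (p - 1) <;> by_cases hd' : 1 ≤ p' ∧ f p' < f (p' - 1)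
  · exact (majIncrement_strictAnti_descent hpp' hp'L hd hd').ne'
  · exact ((majIncrement_of_descent hpL hd).2.trans_lt (majIncrement_of_rise hp'L hd')).ne
  · exact ((majIncrement_of_descent hp'L hd').2.trans_lt (majIncrement_of_rise hpL hd)).ne'
  · exact (majIncrement_strictMono_rise hpp' hp'L hd hd').ne

end MajIncrement

lemma majIncrement_injOn (f : ℕ → ℕ) (L : ℕ) :
    Set.InjOn (majIncrement f L) (range (L + 1)) := by
  intro p hp p' hp' h
  simp only [coe_range, Set.mem_Iio] at hp hp'
  rcases lt_trichotomy p p' with hlt | heq | hgt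
  · exact absurd h (majIncrement_ne_of_lt hlt (by omega))
  · exact heq
  · exact absurd h.symm (majIncrement_ne_of_lt hgt (by omega))

lemma image_majIncrement (f : ℕ → ℕ) (L : ℕ) :
    (range (L + 1)).image (majIncrement f L) = range (L + 1) :=
  eq_of_subset_of_card_le
    (fun k hk => by
      obtain ⟨p, hp, rfl⟩ := mem_image.1 hk
      rw [mem_range, Nat.lt_succ_iff] at hp ⊢
      exact majIncrement_le hp)
    (card_image_of_injOn (majIncrement_injOn f L)).ge

lemma sum_pow_majIncrement {R : Type*} [CommSemiring R] (x : R) (f : ℕ → ℕ) (L : ℕ) :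
    ∑ p ∈ range (L + 1), x ^ majIncrement f L p = ∑ k ∈ range (L + 1), x ^ k := by
  conv_rhs => rw [← image_majIncrement f L, sum_image (majIncrement_injOn f L)]

structure IsInsertion (f g : ℕ → ℕ) (L p M : ℕ) : Prop where
  apply_of_lt : ∀ i < p, g i = f i
  apply_self : g p = M
  apply_succ_of_le : ∀ i, p ≤ i → i < L → g (i + 1) = f i

section Insertion

variable {f g : ℕ → ℕ} {L p M : ℕ}

lemma IsInsertion.sum_range_descentWeight (h : IsInsertion f g L p M) (hM : ∀ i < L, f i < M)
    (hp : p ≤ L) :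
    ∑ i ∈ range p, descentWeight g i = ∑ i ∈ range (p - 1), descentWeight f i := by
  rcases p with _ | q
  · simp
  have hq : descentWeight g q = 0 := by
    rw [descentWeight, if_neg]
    rw [h.apply_self, h.apply_of_lt q q.lt_succ_self]
    exact not_lt.2 (hM q (by omega)).le
  rw [sum_range_succ, hq, add_zero, Nat.add_sub_cancel]
  refine sum_congr rfl fun i hi => ?_
  have hi := mem_range.1 hi
  rw [descentWeight, descentWeight, h.apply_of_lt i (by omega), h.apply_of_lt (i + 1) (by omega)]

lemma IsInsertion.sum_Ico_descentWeight (h : IsInsertion f g L p M) (hM : ∀ i < L, f i < M)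
    (hp : p < L) :
    ∑ i ∈ Ico p L, descentWeight g i
      = p + 1 + ∑ i ∈ Ico p (L - 1), descentWeight f i + descentsIn f p (L - 1) := by
  have hself : descentWeight g p = p + 1 := by
    rw [descentWeight, if_pos]
    rw [h.apply_succ_of_le p le_rfl hp, h.apply_self]
    exact hM p hp
  have hshift : ∀ i ∈ Ico p (L - 1),
      descentWeight g (i + 1) = descentWeight f i + if f (i + 1) < f i then 1 else 0 := by
    intro i hi
    have hi := mem_Ico.1 hi
    rw [descentWeight, descentWeight, h.apply_succ_of_le i hi.1 (by omega),
      h.apply_succ_of_le (i + 1) (by omega) (by omega)]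
    split_ifs <;> rfl
  rw [sum_eq_sum_Ico_succ_bot hp, hself, show L = L - 1 + 1 by omega, ← sum_Ico_add',
    Nat.add_sub_cancel, sum_congr rfl hshift, sum_add_distrib, descentsIn]
  ring

lemma IsInsertion.majSeq_eq (h : IsInsertion f g L p M) (hM : ∀ i < L, f i < M) (hp : p ≤ L) :
    majSeq g (L + 1) = majSeq f L + majIncrement f L p := by
  have hprefix := h.sum_range_descentWeight hM hp
  rw [majSeq, majSeq, Nat.add_sub_cancel]
  rcases hp.eq_or_lt with rfl | hpL
  · rw [hprefix, majIncrement, if_pos rfl, add_zero]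
  have hslot : ∑ i ∈ Ico (p - 1) p, descentWeight f i
      = if 1 ≤ p ∧ f p < f (p - 1) then p else 0 := by
    rcases Nat.eq_zero_or_pos p with rfl | hp1
    · simp
    rw [Nat.Ico_pred_singleton hp1, sum_singleton, descentWeight, Nat.sub_add_cancel hp1]
    exact if_congr (and_iff_right hp1).symm rfl rfl
  have hsplit_g := sum_range_add_sum_Ico (descentWeight g) hpL.le
  have hsplit_f := sum_range_add_sum_Ico (descentWeight f) (show p - 1 ≤ L - 1 by omega)
  rw [← sum_Ico_consecutive _ (Nat.sub_le p 1) (show p ≤ L - 1 by omega), hslot] at hsplit_f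
  rw [← hsplit_g, ← hsplit_f, hprefix, h.sum_Ico_descentWeight hM hpL, majIncrement,
    if_neg hpL.ne]
  split_ifs with hd <;> omega

end Insertion

/-- Insert the new maximal value `m` at position `p` into the one-line notation of `τ`. -/
def insertMax {m : ℕ} (τ : Perm (Fin m)) (p : Fin (m + 1)) : Perm (Fin (m + 1)) :=
  (finSuccEquiv' p).trans ((optionCongr τ).trans (finSuccEquiv' (Fin.last m)).symm)

section InsertMax

variable {m : ℕ}

@[simp]
lemma insertMax_apply_self (τ : Perm (Fin m)) (p : Fin (m + 1)) :
    insertMax τ p p = Fin.last m := by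
  simp [insertMax]

@[simp]
lemma insertMax_apply_succAbove (τ : Perm (Fin m)) (p : Fin (m + 1)) (j : Fin m) :
    insertMax τ p (p.succAbove j) = (τ j).castSucc := by
  simp [insertMax, Fin.succAbove_last]

lemma insertMax_bijective (m : ℕ) :
    Function.Bijective fun x : Perm (Fin m) × Fin (m + 1) => insertMax x.1 x.2 := by
  refine (Fintype.bijective_iff_injective_and_card _).2 ⟨?_, ?_⟩
  · rintro ⟨τ, p⟩ ⟨τ', p'⟩ h
    simp only at h
    obtain rfl : p = p' := (insertMax τ' p').injective <| by
      rw [insertMax_apply_self, ← h, insertMax_apply_self]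
    obtain rfl : τ = τ' := Equiv.ext fun j => Fin.castSucc_injective m <| by
      rw [← insertMax_apply_succAbove, ← insertMax_apply_succAbove, h]
    rfl
  · simp [Fintype.card_perm, Nat.factorial_succ, Nat.mul_comm]

lemma valAt_lt (τ : Perm (Fin m)) {i : ℕ} (hi : i < m) : valAt τ i < m := by
  rw [valAt, dif_pos hi]
  exact (τ ⟨i, hi⟩).is_lt

lemma isInsertion_valAt_insertMax (τ : Perm (Fin m)) (p : Fin (m + 1)) :
    IsInsertion (valAt τ) (valAt (insertMax τ p)) m p m where
  apply_of_lt i hi := by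
    have him : i < m := by omega
    have hsa : (⟨i, by omega⟩ : Fin (m + 1)) = p.succAbove ⟨i, him⟩ := by
      rw [Fin.succAbove_of_castSucc_lt _ _ (by rw [Fin.lt_def]; exact hi)]; rfl
    rw [valAt, dif_pos (by omega), valAt, dif_pos him, hsa, insertMax_apply_succAbove,
      Fin.val_castSucc]
  apply_self := by
    rw [valAt, dif_pos p.is_lt, Fin.eta, insertMax_apply_self, Fin.val_last]
  apply_succ_of_le i hpi him := by
    have hsa : (⟨i + 1, by omega⟩ : Fin (m + 1)) = p.succAbove ⟨i, him⟩ := by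
      rw [Fin.succAbove_of_le_castSucc _ _ (by rw [Fin.le_def]; exact hpi)]; rfl
    rw [valAt, dif_pos (by omega), valAt, dif_pos him, hsa, insertMax_apply_succAbove,
      Fin.val_castSucc]

lemma majP_eq_majSeq {k : ℕ} (σ : Perm (Fin k)) : majP σ = majSeq (valAt σ) k := by
  rw [majP, desSet, majSeq, sum_filter]
  rfl

lemma majP_insertMax (τ : Perm (Fin m)) (p : Fin (m + 1)) :
    majP (insertMax τ p) = majP τ + majIncrement (valAt τ) m p := by
  rw [majP_eq_majSeq, majP_eq_majSeq]
  exact (isInsertion_valAt_insertMax τ p).majSeq_eq (fun _ => valAt_lt τ)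
    (Nat.lt_succ_iff.1 p.is_lt)

lemma invNum_eq_sum {k : ℕ} (σ : Perm (Fin k)) :
    invNum σ = ∑ i, ∑ j, if i < j ∧ σ j < σ i then 1 else 0 := by
  rw [invNum, card_filter, ← univ_product_univ, sum_product]

lemma invNum_insertMax (τ : Perm (Fin m)) (p : Fin (m + 1)) :
    invNum (insertMax τ p) = invNum τ + (m - p) := by
  have hright : ∑ j : Fin m, (if p < p.succAbove j then 1 else 0) = m - p := by
    simp_rw [Fin.lt_succAbove_iff_le_castSucc, Fin.le_def, Fin.val_castSucc]
    rw [Fin.sum_univ_eq_sum_range (fun j => if (p : ℕ) ≤ j then 1 else 0), sum_boole, Nat.cast_id,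
      range_eq_Ico, Ico_filter_le, max_eq_right p.val.zero_le, Nat.card_Ico]
  have hlast : ∀ x : Fin m, ¬ Fin.last m < (τ x).castSucc := fun x => (Fin.le_last _).not_gt
  rw [invNum_eq_sum, invNum_eq_sum, Fin.sum_univ_succAbove _ p]
  simp only [Fin.sum_univ_succAbove _ p, insertMax_apply_self, insertMax_apply_succAbove,
    Fin.succAbove_lt_succAbove_iff, Fin.castSucc_lt_castSucc_iff, Fin.castSucc_lt_last, hlast,
    lt_irrefl, and_true, and_false, if_false, zero_add, hright]
  exact add_comm _ _

end InsertMax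

section GeneratingFunction

variable {R : Type*} [CommSemiring R] (x : R)

lemma sum_pow_eq_mul_of_insertMax {m : ℕ} (s : Perm (Fin (m + 1)) → ℕ) (t : Perm (Fin m) → ℕ)
    (e : Perm (Fin m) → Fin (m + 1) → ℕ) (hs : ∀ τ p, s (insertMax τ p) = t τ + e τ p)
    (he : ∀ τ, ∑ p, x ^ e τ p = ∑ k ∈ range (m + 1), x ^ k) :
    ∑ σ, x ^ s σ = (∑ k ∈ range (m + 1), x ^ k) * ∑ τ, x ^ t τ := by
  rw [← (insertMax_bijective m).sum_comp, Fintype.sum_prod_type, mul_sum]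
  refine sum_congr rfl fun τ _ => ?_
  simp_rw [hs, pow_add, ← mul_sum, he, mul_comm]

lemma sum_pow_majP_succ (m : ℕ) :
    ∑ σ : Perm (Fin (m + 1)), x ^ majP σ
      = (∑ k ∈ range (m + 1), x ^ k) * ∑ τ : Perm (Fin m), x ^ majP τ :=
  sum_pow_eq_mul_of_insertMax x _ _ _ majP_insertMax fun τ => by
    rw [Fin.sum_univ_eq_sum_range (fun p => x ^ majIncrement (valAt τ) m p),
      sum_pow_majIncrement]

lemma sum_pow_invNum_succ (m : ℕ) :
    ∑ σ : Perm (Fin (m + 1)), x ^ invNum σ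
      = (∑ k ∈ range (m + 1), x ^ k) * ∑ τ : Perm (Fin m), x ^ invNum τ :=
  sum_pow_eq_mul_of_insertMax x _ _ _ invNum_insertMax fun _ => by
    rw [Fin.sum_univ_eq_sum_range (fun p => x ^ (m - p))]
    exact sum_range_reflect (x ^ ·) (m + 1)

theorem sum_pow_majP_eq_sum_pow_invNum (n : ℕ) :
    ∑ σ : Perm (Fin n), x ^ majP σ = ∑ σ : Perm (Fin n), x ^ invNum σ := by
  induction n with
  | zero => rfl
  | succ m ih => rw [sum_pow_majP_succ, sum_pow_invNum_succ, ih]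

end GeneratingFunction

end MacMahon

/-- MacMahon's equidistribution theorem:
`Σ_{σ ∈ S_n} q^{maj σ} = Σ_{σ ∈ S_n} q^{inv σ}`. -/
theorem stmt16 (n : ℕ) :
    ∑ σ : Equiv.Perm (Fin n), (Polynomial.X : Polynomial ℤ) ^ majP σ =
      ∑ σ : Equiv.Perm (Fin n), (Polynomial.X : Polynomial ℤ) ^ invNum σ :=
  MacMahon.sum_pow_majP_eq_sum_pow_invNum _ n
end
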